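/- arXiv:2201.12864 — 3 statements merged into one kernel-verified Lean document; each statement's English description precedes it below -/
import Mathlib

section
/- Let κ > 1/2 and s > 3κ. There is a constant C (depending on κ and s) such that for all f ∈ L²(ℝ²), the function F_κ defined by F̂_κ(ξ,τ) = f(ξ,τ)/(1+|τ−ξ³|)^κ satisfies ‖A^{−s} F_κ‖_{L²ₓ L^∞ₜ} ≤ C ‖f‖_{L²_ξ L²_τ}. -/
noncomputable section
open MeasureTheory Real Set
open scoped ENNReal NNReal

set_option maxHeartbeats 1600000

section KdVAuxSection
open Filter Complex

namespace KdVAux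


lemma two_rpow (x : ℝ≥0∞) : x ^ (2:ℝ) = x * x := by
  rw [show (2:ℝ) = ((2:ℕ):ℝ) by norm_num, ENNReal.rpow_natCast, sq]

lemma norm_exp_I_mul (r : ℝ) : ‖Complex.exp (Complex.I * r)‖ = 1 := by
  rw [mul_comm]
  exact Complex.norm_exp_ofReal_mul_I r

lemma norm_exp_I_mul' (a b : ℝ) : ‖Complex.exp (Complex.I * (↑a * ↑b))‖ = 1 := by
  rw [show Complex.I * (↑a * ↑b) = Complex.I * ((a*b : ℝ) : ℂ) by push_cast; ring,
    norm_exp_I_mul]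

lemma norm_exp_neg_I_mul' (a b : ℝ) : ‖Complex.exp (-(Complex.I * (↑a * ↑b)))‖ = 1 := by
  rw [show -(Complex.I * (↑a * ↑b)) = Complex.I * ((-(a*b) : ℝ) : ℂ) by push_cast; ring,
    norm_exp_I_mul]

lemma norm_exp_gauss (ε x : ℝ) : ‖Complex.exp (-(ε:ℂ) * x^2)‖ = Real.exp (-ε * x^2) := by
  rw [show -(ε:ℂ) * x^2 = ((-ε * x^2 : ℝ) : ℂ) by push_cast; ring,
    Complex.norm_exp, Complex.ofReal_re]

lemma mul_le_sq_add_sq (a b : ℝ≥0∞) : a * b ≤ a ^ (2:ℝ) + b ^ (2:ℝ) := by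
  rcases le_total a b with h | h
  · calc a * b ≤ b * b := mul_le_mul' h le_rfl
      _ = b ^ (2:ℝ) := (two_rpow b).symm
      _ ≤ _ := le_add_self
  · calc a * b ≤ a * a := mul_le_mul' le_rfl h
      _ = a ^ (2:ℝ) := (two_rpow a).symm
      _ ≤ _ := le_self_add

lemma coe_nnnorm_eq (z : ℂ) : (‖z‖₊ : ℝ≥0∞) = ENNReal.ofReal ‖z‖ :=
  by rw [ofReal_norm, enorm_eq_nnnorm]


lemma coe_nnnorm_exp_mul {w : ℂ} (hw : ‖Complex.exp w‖ = 1) (z : ℂ) :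
    (‖Complex.exp w * z‖₊ : ℝ≥0∞) = (‖z‖₊ : ℝ≥0∞) := by
  rw [coe_nnnorm_eq, norm_mul, hw, one_mul, ← coe_nnnorm_eq]

lemma norm_exp_I_mul2 (a b c d : ℝ) :
    ‖Complex.exp (Complex.I * (↑a * ↑b + ↑c * ↑d))‖ = 1 := by
  rw [show Complex.I * (↑a * ↑b + ↑c * ↑d) = Complex.I * ((a*b + c*d : ℝ) : ℂ) by
    push_cast; ring, norm_exp_I_mul]

lemma gaussFT {ε : ℝ} (hε : 0 < ε) (u : ℝ) :
    ∫ x : ℝ, Complex.exp (Complex.I * u * x) * Complex.exp (-(ε:ℂ) * x^2)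
      = ((Real.sqrt (π/ε) * Real.exp (-(1/(4*ε)) * u^2) : ℝ) : ℂ) := by
  rw [fourierIntegral_gaussian (by simpa using hε) (u:ℂ)]
  rw [Complex.ofReal_mul]
  congr 1
  · rw [Real.sqrt_eq_rpow, Complex.ofReal_cpow (by positivity)]
    push_cast
    norm_num
  · rw [Complex.ofReal_exp]
    congr 1
    push_cast
    ring

lemma Kint {ε : ℝ} (hε : 0 < ε) :
    ∫⁻ u : ℝ, ENNReal.ofReal (Real.sqrt (π/ε) * Real.exp (-(1/(4*ε)) * u^2))
      = ENNReal.ofReal (2*π) := by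
  have hpos : (0:ℝ) < 1/(4*ε) := by positivity
  have hint : Integrable (fun u : ℝ => Real.sqrt (π/ε) * Real.exp (-(1/(4*ε)) * u^2)) :=
    (integrable_exp_neg_mul_sq hpos).const_mul _
  rw [← ofReal_integral_eq_lintegral_ofReal hint (ae_of_all _ fun u => by positivity)]
  congr 1
  rw [integral_const_mul, integral_gaussian, ← Real.sqrt_mul (by positivity)]
  rw [show (π/ε) * (π / (1/(4*ε))) = (2*π)^2 by field_simp; ring]
  exact Real.sqrt_sq (by positivity)

/-- The Gaussian-regularized key estimate. -/
lemma planch_key {g : ℝ → ℂ} (hsm : StronglyMeasurable g) (hg : Integrable g)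
    {ε : ℝ} (hε : 0 < ε) :
    ∫⁻ x : ℝ, ENNReal.ofReal (Real.exp (-ε * x^2)) *
        (‖∫ ξ : ℝ, Complex.exp (Complex.I * (↑x * ↑ξ)) * g ξ‖₊ : ℝ≥0∞) ^ (2:ℝ)
      ≤ ENNReal.ofReal (4 * π) * ∫⁻ ξ : ℝ, (‖g ξ‖₊ : ℝ≥0∞) ^ (2:ℝ) := by
  set H : ℝ → ℂ := fun x => ∫ ξ : ℝ, Complex.exp (Complex.I * (↑x * ↑ξ)) * g ξ with hH
  have hHsm : StronglyMeasurable H := by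
    apply MeasureTheory.StronglyMeasurable.integral_prod_right'
      (f := fun p : ℝ × ℝ => Complex.exp (Complex.I * (↑p.1 * ↑p.2)) * g p.2)
    exact ((Complex.continuous_exp.comp (by continuity)).stronglyMeasurable).mul
      (hsm.comp_measurable measurable_snd)
  -- the real integrand
  set φ : ℝ → ℝ := fun x => Real.exp (-ε * x^2) * (‖H x‖ * ‖H x‖) with hφ
  have hHb : ∀ x, ‖H x‖ ≤ ∫ ξ, ‖g ξ‖ := by
    intro x
    refine (norm_integral_le_integral_norm _).trans_eq ?_
    congr 1; funext ξ
    rw [norm_mul, show Complex.I * (↑x * ↑ξ) = Complex.I * ((x*ξ : ℝ):ℂ) by push_cast; ring,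
      norm_exp_I_mul, one_mul]
  have hφsm : StronglyMeasurable φ := by
    have : StronglyMeasurable (fun x : ℝ => Real.exp (-ε * x^2)) :=
      (Real.continuous_exp.comp (by continuity)).stronglyMeasurable
    exact this.mul (hHsm.norm.mul hHsm.norm)
  have hφint : Integrable φ := by
    have hb : Integrable (fun x : ℝ => (∫ ξ, ‖g ξ‖)^2 * Real.exp (-ε * x^2)) :=
      (integrable_exp_neg_mul_sq hε).const_mul _
    refine hb.mono' hφsm.aestronglyMeasurable (ae_of_all _ fun x => ?_)
    have h0 : 0 ≤ Real.exp (-ε * x^2) := (Real.exp_pos _).le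
    have h2 : ‖H x‖ * ‖H x‖ ≤ (∫ ξ, ‖g ξ‖) * (∫ ξ, ‖g ξ‖) :=
      mul_le_mul (hHb x) (hHb x) (norm_nonneg _) ((norm_nonneg _).trans (hHb x))
    have h3 : (0:ℝ) ≤ φ x := mul_nonneg h0 (mul_nonneg (norm_nonneg _) (norm_nonneg _))
    rw [Real.norm_eq_abs, _root_.abs_of_nonneg h3]
    show Real.exp (-ε * x^2) * (‖H x‖ * ‖H x‖) ≤ _
    calc Real.exp (-ε * x^2) * (‖H x‖ * ‖H x‖)
        ≤ Real.exp (-ε * x^2) * ((∫ ξ, ‖g ξ‖) * (∫ ξ, ‖g ξ‖)) :=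
          mul_le_mul_of_nonneg_left h2 h0
      _ = _ := by ring
  -- convert lintegral to integral
  have hconv : ∫⁻ x : ℝ, ENNReal.ofReal (Real.exp (-ε * x^2)) * (‖H x‖₊ : ℝ≥0∞) ^ (2:ℝ)
      = ENNReal.ofReal (∫ x, φ x) := by
    rw [ofReal_integral_eq_lintegral_ofReal hφint (ae_of_all _ fun x => by positivity)]
    congr 1; funext x
    rw [hφ, ENNReal.ofReal_mul (Real.exp_pos _).le]
    congr 1
    rw [two_rpow, coe_nnnorm_eq, ← ENNReal.ofReal_mul (norm_nonneg _)]
  rw [hconv]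
  set Kr : ℝ → ℝ := fun u => Real.sqrt (π/ε) * Real.exp (-(1/(4*ε)) * u^2) with hKr
  have hKrnn : ∀ u, 0 ≤ Kr u := fun u => by rw [hKr]; positivity
  have hKrc : Continuous Kr := by rw [hKr]; continuity
  set Ψ : ℝ → ℝ × ℝ → ℂ := fun x p =>
    Complex.exp (-(ε:ℂ) * x^2) *
      (Complex.exp (Complex.I * (↑x * ↑p.1)) * g p.1 *
        (Complex.exp (-(Complex.I * (↑x * ↑p.2))) * (starRingEnd ℂ) (g p.2))) with hΨ
  have hΨsm : StronglyMeasurable (Function.uncurry Ψ) := by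
    have cc : Continuous fun q : ℝ × (ℝ × ℝ) => (q.1 : ℂ) :=
      Complex.continuous_ofReal.comp continuous_fst
    have cc1 : Continuous fun q : ℝ × (ℝ × ℝ) => (q.2.1 : ℂ) :=
      Complex.continuous_ofReal.comp (continuous_fst.comp continuous_snd)
    have cc2 : Continuous fun q : ℝ × (ℝ × ℝ) => (q.2.2 : ℂ) :=
      Complex.continuous_ofReal.comp (continuous_snd.comp continuous_snd)
    have c1 : Continuous fun q : ℝ × (ℝ × ℝ) => Complex.exp (-(ε:ℂ) * q.1^2) :=
      Complex.continuous_exp.comp ((continuous_const.mul ((cc.pow 2))))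
    have c2 : Continuous fun q : ℝ × (ℝ × ℝ) => Complex.exp (Complex.I * (↑q.1 * ↑q.2.1)) :=
      Complex.continuous_exp.comp (continuous_const.mul (cc.mul cc1))
    have c4 : Continuous fun q : ℝ × (ℝ × ℝ) => Complex.exp (-(Complex.I * (↑q.1 * ↑q.2.2))) :=
      Complex.continuous_exp.comp ((continuous_const.mul (cc.mul cc2)).neg)
    have m3 : StronglyMeasurable fun q : ℝ × (ℝ × ℝ) => g q.2.1 :=
      hsm.comp_measurable measurable_snd.fst
    have m5 : StronglyMeasurable fun q : ℝ × (ℝ × ℝ) => (starRingEnd ℂ) (g q.2.2) :=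
      continuous_star.comp_stronglyMeasurable (hsm.comp_measurable measurable_snd.snd)
    exact c1.stronglyMeasurable.mul ((c2.stronglyMeasurable.mul m3).mul
      (c4.stronglyMeasurable.mul m5))
  have hΨint : Integrable (Function.uncurry Ψ) (volume.prod volume) := by
    have hbnd : Integrable (fun q : ℝ × (ℝ × ℝ) =>
        Real.exp (-ε * q.1^2) * (‖g q.2.1‖ * ‖g q.2.2‖)) (volume.prod (volume.prod volume)) :=
      (integrable_exp_neg_mul_sq hε).mul_prod (hg.norm.mul_prod hg.norm)
    rw [show (volume : Measure (ℝ × ℝ)) = volume.prod volume from Measure.volume_eq_prod ℝ ℝ]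
    refine hbnd.mono' ?_ (ae_of_all _ fun q => ?_)
    · exact hΨsm.aestronglyMeasurable
    · show ‖Complex.exp (-(ε:ℂ) * q.1^2) *
          (Complex.exp (Complex.I * (↑q.1 * ↑q.2.1)) * g q.2.1 *
            (Complex.exp (-(Complex.I * (↑q.1 * ↑q.2.2))) * (starRingEnd ℂ) (g q.2.2)))‖ ≤ _
      simp only [norm_mul, norm_exp_gauss, norm_exp_I_mul', norm_exp_neg_I_mul', one_mul,
        RCLike.norm_conj]
      exact le_rfl
  have key2 : ((∫ x, φ x : ℝ) : ℂ)
      = ∫ p : ℝ × ℝ, g p.1 * (starRingEnd ℂ) (g p.2) * ((Kr (p.1 - p.2) : ℝ) : ℂ) := by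
    have e0 : ((∫ x, φ x : ℝ) : ℂ) = ∫ x, ((φ x : ℝ) : ℂ) := integral_ofReal.symm
    have e1 : ∀ x, ((φ x : ℝ) : ℂ) = ∫ p : ℝ × ℝ, Ψ x p := by
      intro x
      have hHc : H x * (starRingEnd ℂ) (H x) = ((‖H x‖ * ‖H x‖ : ℝ) : ℂ) := by
        rw [Complex.mul_conj, Complex.normSq_eq_norm_sq, sq,
          Complex.ofReal_mul]
      have hconj : (starRingEnd ℂ) (H x)
          = ∫ η : ℝ, Complex.exp (-(Complex.I * (↑x * ↑η))) * (starRingEnd ℂ) (g η) := by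
        calc (starRingEnd ℂ) (H x)
            = (starRingEnd ℂ) (∫ ξ : ℝ, Complex.exp (Complex.I * (↑x * ↑ξ)) * g ξ) := rfl
          _ = ∫ ξ : ℝ, (starRingEnd ℂ) (Complex.exp (Complex.I * (↑x * ↑ξ)) * g ξ) :=
              integral_conj.symm
          _ = _ := by
              congr 1; funext η
              rw [map_mul, ← Complex.exp_conj]
              congr 2
              simp [Complex.conj_I, Complex.conj_ofReal, map_mul, neg_mul]
      have hprod : H x * (starRingEnd ℂ) (H x) = ∫ p : ℝ × ℝ,
          (Complex.exp (Complex.I * (↑x * ↑p.1)) * g p.1) *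
            (Complex.exp (-(Complex.I * (↑x * ↑p.2))) * (starRingEnd ℂ) (g p.2)) := by
        calc H x * (starRingEnd ℂ) (H x)
            = (∫ ξ : ℝ, Complex.exp (Complex.I * (↑x * ↑ξ)) * g ξ) *
                ∫ η : ℝ, Complex.exp (-(Complex.I * (↑x * ↑η))) * (starRingEnd ℂ) (g η) := by
              rw [hconj]
          _ = _ := by
              rw [show (volume : Measure (ℝ × ℝ)) = volume.prod volume from
                Measure.volume_eq_prod ℝ ℝ]
              exact (integral_prod_mul (fun ξ : ℝ => Complex.exp (Complex.I * (↑x * ↑ξ)) * g ξ)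
                (fun η : ℝ => Complex.exp (-(Complex.I * (↑x * ↑η))) * (starRingEnd ℂ) (g η))).symm
      calc ((φ x : ℝ) : ℂ)
          = ((Real.exp (-ε * x^2) : ℝ) : ℂ) * ((‖H x‖ * ‖H x‖ : ℝ) : ℂ) := by
            show ((Real.exp (-ε * x^2) * (‖H x‖ * ‖H x‖) : ℝ) : ℂ) = _
            push_cast
            ring
        _ = Complex.exp (-(ε:ℂ) * x^2) * (H x * (starRingEnd ℂ) (H x)) := by
            rw [hHc, show -(ε:ℂ) * x^2 = ((-ε * x^2 : ℝ) : ℂ) by push_cast; ring,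
              ← Complex.ofReal_exp]
        _ = ∫ p : ℝ × ℝ, Ψ x p := by rw [hprod, ← integral_const_mul]
    rw [e0]
    calc ∫ x, ((φ x : ℝ) : ℂ) = ∫ x, ∫ p : ℝ × ℝ, Ψ x p := by
          congr 1; funext x; exact e1 x
      _ = ∫ p : ℝ × ℝ, ∫ x, Ψ x p := integral_integral_swap hΨint
      _ = _ := by
          congr 1; funext p
          have rearr : ∀ x : ℝ, Ψ x p = (g p.1 * (starRingEnd ℂ) (g p.2)) *
              (Complex.exp (Complex.I * ↑(p.1 - p.2) * ↑x) * Complex.exp (-(ε:ℂ) * x^2)) := by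
            intro x
            show Complex.exp (-(ε:ℂ) * x^2) *
                (Complex.exp (Complex.I * (↑x * ↑p.1)) * g p.1 *
                  (Complex.exp (-(Complex.I * (↑x * ↑p.2))) * (starRingEnd ℂ) (g p.2))) = _
            rw [show Complex.I * ↑(p.1 - p.2) * (↑x : ℂ)
                = Complex.I * (↑x * ↑p.1) + -(Complex.I * (↑x * ↑p.2)) by push_cast; ring,
              Complex.exp_add]
            ring
          simp_rw [rearr]
          rw [integral_const_mul, gaussFT hε]
  -- now the ℝ≥0∞ estimate
  have h1 : ENNReal.ofReal (∫ x, φ x)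
      ≤ ∫⁻ p : ℝ × ℝ, (‖g p.1‖₊ : ℝ≥0∞) * (‖g p.2‖₊ : ℝ≥0∞)
          * ENNReal.ofReal (Kr (p.1 - p.2)) := by
    calc ENNReal.ofReal (∫ x, φ x)
        ≤ (‖∫ p : ℝ × ℝ, g p.1 * (starRingEnd ℂ) (g p.2) * ((Kr (p.1 - p.2) : ℝ) : ℂ)‖₊ : ℝ≥0∞) := by
          rw [coe_nnnorm_eq]
          apply ENNReal.ofReal_le_ofReal
          calc ∫ x, φ x ≤ |∫ x, φ x| := le_abs_self _
            _ = ‖((∫ x, φ x : ℝ) : ℂ)‖ := by rw [Complex.norm_real, Real.norm_eq_abs]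
            _ = _ := by rw [key2]
      _ ≤ ∫⁻ p : ℝ × ℝ, ‖g p.1 * (starRingEnd ℂ) (g p.2) * ((Kr (p.1 - p.2) : ℝ) : ℂ)‖₊ :=
          enorm_integral_le_lintegral_enorm _
      _ = _ := by
          congr 1; funext p
          push_cast [nnnorm_mul]
          rw [RCLike.nnnorm_conj]
          congr 1
          rw [coe_nnnorm_eq, Complex.norm_real, Real.norm_eq_abs,
            _root_.abs_of_nonneg (hKrnn _)]
  have hgm : Measurable fun ξ : ℝ => (‖g ξ‖₊ : ℝ≥0∞) := hsm.measurable.enorm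
  have hKm : Measurable fun p : ℝ × ℝ => ENNReal.ofReal (Kr (p.1 - p.2)) :=
    (hKrc.comp (continuous_fst.sub continuous_snd)).measurable.ennreal_ofReal
  have hKshift : ∀ ξ : ℝ, ∫⁻ η : ℝ, ENNReal.ofReal (Kr (ξ - η)) = ENNReal.ofReal (2*π) := by
    intro ξ
    have : ∀ η : ℝ, Kr (ξ - η) = Kr (η - ξ) := by
      intro η; rw [hKr]; simp only []
      congr 2
      rw [show (ξ - η)^2 = (η - ξ)^2 by ring]
    simp_rw [this]
    rw [lintegral_sub_right_eq_self (fun u => ENNReal.ofReal (Kr u)) ξ, Kint hε]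
  have hKshift' : ∀ η : ℝ, ∫⁻ ξ : ℝ, ENNReal.ofReal (Kr (ξ - η)) = ENNReal.ofReal (2*π) := by
    intro η
    rw [lintegral_sub_right_eq_self (fun u => ENNReal.ofReal (Kr u)) η, Kint hε]
  have hsq_ne_top : ∀ ξ : ℝ, (‖g ξ‖₊ : ℝ≥0∞) ^ (2:ℝ) ≠ ⊤ := by
    intro ξ; rw [two_rpow]; exact ENNReal.mul_ne_top ENNReal.coe_ne_top ENNReal.coe_ne_top
  have hm1 : Measurable fun p : ℝ × ℝ =>
      (‖g p.1‖₊ : ℝ≥0∞) ^ (2:ℝ) * ENNReal.ofReal (Kr (p.1 - p.2)) :=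
    ((hgm.comp measurable_fst).pow_const _).mul hKm
  have hm2 : Measurable fun p : ℝ × ℝ =>
      (‖g p.2‖₊ : ℝ≥0∞) ^ (2:ℝ) * ENNReal.ofReal (Kr (p.1 - p.2)) :=
    ((hgm.comp measurable_snd).pow_const _).mul hKm
  calc ENNReal.ofReal (∫ x, φ x)
      ≤ ∫⁻ p : ℝ × ℝ, (‖g p.1‖₊ : ℝ≥0∞) * (‖g p.2‖₊ : ℝ≥0∞)
          * ENNReal.ofReal (Kr (p.1 - p.2)) := h1
    _ ≤ ∫⁻ p : ℝ × ℝ, ((‖g p.1‖₊ : ℝ≥0∞) ^ (2:ℝ) + (‖g p.2‖₊ : ℝ≥0∞) ^ (2:ℝ))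
          * ENNReal.ofReal (Kr (p.1 - p.2)) :=
        lintegral_mono fun p => mul_le_mul_left (mul_le_sq_add_sq _ _) _
    _ = (∫⁻ p : ℝ × ℝ, (‖g p.1‖₊ : ℝ≥0∞) ^ (2:ℝ) * ENNReal.ofReal (Kr (p.1 - p.2)))
        + ∫⁻ p : ℝ × ℝ, (‖g p.2‖₊ : ℝ≥0∞) ^ (2:ℝ) * ENNReal.ofReal (Kr (p.1 - p.2)) := by
        simp_rw [add_mul]
        rw [lintegral_add_left hm1]
    _ = ENNReal.ofReal (2*π) * (∫⁻ ξ : ℝ, (‖g ξ‖₊ : ℝ≥0∞) ^ (2:ℝ))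
        + ENNReal.ofReal (2*π) * (∫⁻ ξ : ℝ, (‖g ξ‖₊ : ℝ≥0∞) ^ (2:ℝ)) := by
        congr 1
        · rw [show (volume : Measure (ℝ × ℝ)) = volume.prod volume from Measure.volume_eq_prod ℝ ℝ,
            lintegral_prod _ hm1.aemeasurable]
          simp only []
          calc ∫⁻ ξ : ℝ, ∫⁻ η : ℝ, (‖g ξ‖₊ : ℝ≥0∞) ^ (2:ℝ) * ENNReal.ofReal (Kr (ξ - η))
              = ∫⁻ ξ : ℝ, (‖g ξ‖₊ : ℝ≥0∞) ^ (2:ℝ) * ENNReal.ofReal (2*π) := by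
                congr 1; funext ξ
                rw [lintegral_const_mul' _ _ (hsq_ne_top ξ), hKshift ξ]
            _ = _ := by
                rw [lintegral_mul_const' _ _ ENNReal.ofReal_ne_top, mul_comm]
        · rw [show (volume : Measure (ℝ × ℝ)) = volume.prod volume from Measure.volume_eq_prod ℝ ℝ,
            lintegral_prod_symm _ hm2.aemeasurable]
          simp only []
          calc ∫⁻ η : ℝ, ∫⁻ ξ : ℝ, (‖g η‖₊ : ℝ≥0∞) ^ (2:ℝ) * ENNReal.ofReal (Kr (ξ - η))
              = ∫⁻ η : ℝ, (‖g η‖₊ : ℝ≥0∞) ^ (2:ℝ) * ENNReal.ofReal (2*π) := by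
                congr 1; funext η
                rw [lintegral_const_mul' _ _ (hsq_ne_top η), hKshift' η]
            _ = _ := by
                rw [lintegral_mul_const' _ _ ENNReal.ofReal_ne_top, mul_comm]
    _ = _ := by
        rw [show (4:ℝ) * π = (2*π) + (2*π) by ring, ENNReal.ofReal_add (by positivity) (by positivity)]
        ring

lemma planch (hsm : StronglyMeasurable g) (hg : Integrable g) :
    ∫⁻ x : ℝ, (‖∫ ξ : ℝ, Complex.exp (Complex.I * (↑x * ↑ξ)) * g ξ‖₊ : ℝ≥0∞) ^ (2:ℝ)
      ≤ ENNReal.ofReal (4 * π) * ∫⁻ ξ : ℝ, (‖g ξ‖₊ : ℝ≥0∞) ^ (2:ℝ) := by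
  set H : ℝ → ℂ := fun x => ∫ ξ : ℝ, Complex.exp (Complex.I * (↑x * ↑ξ)) * g ξ with hH
  have hHsm : StronglyMeasurable H := by
    apply MeasureTheory.StronglyMeasurable.integral_prod_right'
      (f := fun p : ℝ × ℝ => Complex.exp (Complex.I * (↑p.1 * ↑p.2)) * g p.2)
    exact ((Complex.continuous_exp.comp (by continuity)).stronglyMeasurable).mul
      (hsm.comp_measurable measurable_snd)
  have hmeas : ∀ n : ℕ, Measurable fun x : ℝ =>
      ENNReal.ofReal (Real.exp (-(1/(n+1)) * x^2)) * (‖H x‖₊ : ℝ≥0∞) ^ (2:ℝ) := by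
    intro n
    exact ((Real.continuous_exp.comp (by continuity)).measurable.ennreal_ofReal).mul
      (hHsm.measurable.enorm.pow_const _)
  have hptw : ∀ x : ℝ, (‖H x‖₊ : ℝ≥0∞) ^ (2:ℝ)
      = liminf (fun n : ℕ =>
          ENNReal.ofReal (Real.exp (-(1/(n+1)) * x^2)) * (‖H x‖₊ : ℝ≥0∞) ^ (2:ℝ)) atTop := by
    intro x
    have h0 : Tendsto (fun n : ℕ => -(1/((n:ℝ)+1)) * x^2) atTop (nhds 0) := by
      have := (tendsto_one_div_add_atTop_nhds_zero_nat : Tendsto (fun n : ℕ => 1 / ((n:ℝ) + 1)) atTop (nhds 0))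
      have := (this.neg).mul_const (x^2)
      simpa using this
    have h1 : Tendsto (fun n : ℕ => ENNReal.ofReal (Real.exp (-(1/((n:ℝ)+1)) * x^2))) atTop
        (nhds 1) := by
      have := (Real.continuous_exp.tendsto 0).comp h0
      simp only [Real.exp_zero] at this
      have := ENNReal.tendsto_ofReal this
      simpa using this
    have h2 : Tendsto (fun n : ℕ =>
        ENNReal.ofReal (Real.exp (-(1/((n:ℝ)+1)) * x^2)) * (‖H x‖₊ : ℝ≥0∞) ^ (2:ℝ)) atTop
        (nhds ((‖H x‖₊ : ℝ≥0∞) ^ (2:ℝ))) := by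
      have := ENNReal.Tendsto.mul_const h1 (Or.inl one_ne_zero)
        (b := (‖H x‖₊ : ℝ≥0∞) ^ (2:ℝ))
      simpa using this
    exact (h2.liminf_eq).symm
  calc ∫⁻ x : ℝ, (‖H x‖₊ : ℝ≥0∞) ^ (2:ℝ)
      = ∫⁻ x : ℝ, liminf (fun n : ℕ =>
          ENNReal.ofReal (Real.exp (-(1/(n+1)) * x^2)) * (‖H x‖₊ : ℝ≥0∞) ^ (2:ℝ)) atTop := by
        congr 1; funext x; exact hptw x
    _ ≤ liminf (fun n : ℕ => ∫⁻ x : ℝ,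
          ENNReal.ofReal (Real.exp (-(1/(n+1)) * x^2)) * (‖H x‖₊ : ℝ≥0∞) ^ (2:ℝ)) atTop :=
        lintegral_liminf_le hmeas
    _ ≤ ENNReal.ofReal (4 * π) * ∫⁻ ξ : ℝ, (‖g ξ‖₊ : ℝ≥0∞) ^ (2:ℝ) := by
        apply Filter.liminf_le_of_le
        · exact ⟨0, Filter.eventually_map.mpr (Filter.Eventually.of_forall fun a => zero_le)⟩
        · intro b hb
          obtain ⟨n, hn⟩ := hb.exists
          exact hn.trans (planch_key hsm hg (by positivity))



lemma I_lt_top {a : ℝ} (ha : 1 < a) :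
    ∫⁻ u : ℝ, ENNReal.ofReal ((1+|u|)^(-a)) < ⊤ := by
  have hint : Integrable (fun u : ℝ => (1+‖u‖)^(-a)) :=
    integrable_one_add_norm (by simpa using ha)
  simp_rw [Real.norm_eq_abs] at hint
  exact hint.lintegral_lt_top

lemma ofReal_rpow_sq {x : ℝ} (hx : 0 < x) (a : ℝ) :
    ENNReal.ofReal (x ^ (-a)) ^ (2:ℝ) = ENNReal.ofReal (x ^ (-(2*a))) := by
  rw [ENNReal.ofReal_rpow_of_nonneg (by positivity) (by norm_num : (0:ℝ) ≤ 2),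
    ← Real.rpow_mul hx.le]
  congr 2
  ring

lemma wt {κ s : ℝ} (hκ0 : 0 < κ) (hs3 : 3*κ ≤ s) (ξ τ : ℝ) :
    (1+|τ|)^κ * ((1+|ξ|)^(-s) * (1+|τ-ξ^3|)^(-κ)) ≤ 1 := by
  set b : ℝ := 1+|ξ| with hb
  set c : ℝ := 1+|τ-ξ^3| with hc
  have hb1 : 1 ≤ b := le_add_of_nonneg_right (abs_nonneg _)
  have hc1 : 1 ≤ c := le_add_of_nonneg_right (abs_nonneg _)
  have hb0 : (0:ℝ) < b := lt_of_lt_of_le one_pos hb1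
  have hc0 : (0:ℝ) < c := lt_of_lt_of_le one_pos hc1
  have h1 : 1+|τ| ≤ c * b^(3:ℕ) := by
    have e1 : |τ| ≤ |τ-ξ^3| + |ξ^3| := by
      calc |τ| = |(τ-ξ^3) + ξ^3| := by ring_nf
        _ ≤ _ := abs_add_le _ _
    have e2 : |ξ^3| = |ξ|^3 := abs_pow ξ 3
    have e3 : 1 + |ξ|^3 ≤ b^(3:ℕ) := by rw [hb]; nlinarith [abs_nonneg ξ]
    have e4 : c * (1 + |ξ|^3) ≤ c * b^(3:ℕ) := mul_le_mul_of_nonneg_left e3 hc0.le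
    have e5 : 1 + |τ| ≤ c * (1 + |ξ|^3) := by
      rw [hc]
      nlinarith [abs_nonneg (τ-ξ^3), abs_nonneg ξ, pow_nonneg (abs_nonneg ξ) 3, e1, e2]
    linarith
  have h2 : (1+|τ|)^κ ≤ c^κ * b^(3*κ) := by
    calc (1+|τ|)^κ ≤ (c * b^(3:ℕ))^κ := Real.rpow_le_rpow (by positivity) h1 hκ0.le
      _ = c^κ * (b^(3:ℕ))^κ := Real.mul_rpow hc0.le (by positivity)
      _ = c^κ * b^(3*κ) := by
          rw [← Real.rpow_natCast b 3, ← Real.rpow_mul hb0.le]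
          norm_num
  calc (1+|τ|)^κ * (b^(-s) * c^(-κ)) ≤ (c^κ * b^(3*κ)) * (b^(-s) * c^(-κ)) :=
        mul_le_mul_of_nonneg_right h2 (by positivity)
    _ = (c^κ * c^(-κ)) * (b^(3*κ) * b^(-s)) := by ring
    _ = b^(3*κ + -s) := by
        rw [← Real.rpow_add hc0, ← Real.rpow_add hb0]
        simp
    _ ≤ 1 := Real.rpow_le_one_of_one_le_of_nonpos hb1 (by linarith)

lemma conj22 : Real.HolderConjugate 2 2 := Real.HolderConjugate.two_two

lemma lint_CS {α : Type*} [MeasurableSpace α] {μ : Measure α} {u v : α → ℝ≥0∞}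
    (hu : AEMeasurable u μ) (hv : AEMeasurable v μ) :
    ∫⁻ a, u a * v a ∂μ
      ≤ (∫⁻ a, u a ^ (2:ℝ) ∂μ) ^ (1/2:ℝ) * (∫⁻ a, v a ^ (2:ℝ) ∂μ) ^ (1/2:ℝ) := by
  have := ENNReal.lintegral_mul_le_Lp_mul_Lq μ conj22 hu hv
  simpa using this


end KdVAux

end KdVAuxSection

open KdVAux

/-- Fourier transform in the space variable. -/
def FT1 (u : ℝ → ℂ) (ξ : ℝ) : ℂ :=
  (Real.sqrt (2 * Real.pi) : ℂ)⁻¹ * ∫ x : ℝ, Complex.exp (-Complex.I * (x : ℂ) * (ξ : ℂ)) * u x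

/-- Space–time Fourier transform. -/
def FT2 (u : ℝ → ℝ → ℂ) (ξ τ : ℝ) : ℂ :=
  ((2 * Real.pi : ℝ) : ℂ)⁻¹ *
    ∫ z : ℝ × ℝ, Complex.exp (-Complex.I * ((z.1 : ℂ) * (ξ : ℂ) + (z.2 : ℂ) * (τ : ℂ))) * u z.1 z.2

/-- The Gevrey weight `e^{ρ(1+|ξ|)} (1+|ξ|)^s`. -/
def gevreyWeight (ρ s ξ : ℝ) : ℝ := Real.exp (ρ * (1 + |ξ|)) * (1 + |ξ|) ^ s

/-- The norm of the analytic Gevrey space `G_{ρ,s}`. -/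
def gevreyNorm (ρ s : ℝ) (u : ℝ → ℂ) : ℝ :=
  Real.sqrt (∫ ξ : ℝ, (gevreyWeight ρ s ξ * ‖FT1 u ξ‖) ^ 2)

/-- Membership in the analytic Gevrey space `G_{ρ,s}`. -/
def InGevrey (ρ s : ℝ) (u : ℝ → ℂ) : Prop :=
  Integrable (fun ξ : ℝ => (gevreyWeight ρ s ξ * ‖FT1 u ξ‖) ^ 2)

/-- The Bourgain weight `e^{ρ(1+|ξ|)} (1+|ξ|)^s (1+|τ-ξ³|)^b`. -/
def bourgainWeight (ρ s b ξ τ : ℝ) : ℝ :=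
  Real.exp (ρ * (1 + |ξ|)) * (1 + |ξ|) ^ s * (1 + |τ - ξ ^ 3|) ^ b

/-- The norm of the analytic Bourgain space `X_{ρ,s,b}`. -/
def XNorm (ρ s b : ℝ) (u : ℝ → ℝ → ℂ) : ℝ :=
  Real.sqrt (∫ z : ℝ × ℝ, (bourgainWeight ρ s b z.1 z.2 * ‖FT2 u z.1 z.2‖) ^ 2)

/-- Membership in the analytic Bourgain space `X_{ρ,s,b}`. -/
def InX (ρ s b : ℝ) (u : ℝ → ℝ → ℂ) : Prop :=
  Integrable (fun z : ℝ × ℝ => (bourgainWeight ρ s b z.1 z.2 * ‖FT2 u z.1 z.2‖) ^ 2)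

/-- The Airy group `W(t) = e^{-t ∂ₓ³}`, given on the Fourier side by `e^{itξ³}`. -/
def airy (t : ℝ) (u₀ : ℝ → ℂ) (x : ℝ) : ℂ :=
  (Real.sqrt (2 * Real.pi) : ℂ)⁻¹ *
    ∫ ξ : ℝ, Complex.exp (Complex.I * ((x : ℂ) * (ξ : ℂ) + (t : ℂ) * (ξ : ℂ) ^ 3)) * FT1 u₀ ξ

/-- Complexification of a real-valued function. -/
def cf (f : ℝ → ℝ) : ℝ → ℂ := fun x => (f x : ℂ)

/-- `u : ℝ → ℝ → ℂ`, `u x t`, is continuous on `[0,T]` with values in `G_{ρ,s}`. -/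
def GevreyContOn (ρ s T : ℝ) (u : ℝ → ℝ → ℂ) : Prop :=
  ∀ t ∈ Set.Icc (0 : ℝ) T, InGevrey ρ s (fun x => u x t) ∧
    ∀ ε > (0 : ℝ), ∃ δ > (0 : ℝ), ∀ t' ∈ Set.Icc (0 : ℝ) T, |t' - t| < δ →
      gevreyNorm ρ s (fun x => u x t' - u x t) < ε

/-- `(u,v)` solves the coupled generalized KdV system on the time set `I`. -/
def IsGKdV (p : ℕ) (I : Set ℝ) (u v : ℝ → ℝ → ℝ) : Prop :=
  ∀ x : ℝ, ∀ t ∈ I,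
    HasDerivAt (fun t' => u x t')
      (-(iteratedDeriv 3 (fun y => u y t) x)
        - deriv (fun y => u y t ^ p * v y t ^ (p + 1)) x) t ∧
    HasDerivAt (fun t' => v x t')
      (-(iteratedDeriv 3 (fun y => v y t) x)
        - deriv (fun y => u y t ^ (p + 1) * v y t ^ p) x) t

/-- A standard smooth cutoff function. -/
structure IsCutoff (ψ : ℝ → ℝ) : Prop where
  smooth : ContDiff ℝ (⊤ : ℕ∞) ψ
  nonneg : ∀ t, 0 ≤ ψ t
  le_one : ∀ t, ψ t ≤ 1
  vanish : ∀ t, 2 ≤ |t| → ψ t = 0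
  eq_one : ∀ t, |t| ≤ 1 → ψ t = 1

/-- The function `A^r F_κ`, whose space–time Fourier transform is
`(1+|ξ|)^r f(ξ,τ)/(1+|τ-ξ³|)^κ`, realized by Fourier inversion. -/
def AFk (r κ : ℝ) (f : ℝ → ℝ → ℂ) (x t : ℝ) : ℂ :=
  ((2 * Real.pi : ℝ) : ℂ)⁻¹ *
    ∫ z : ℝ × ℝ, Complex.exp (Complex.I * ((x : ℂ) * (z.1 : ℂ) + (t : ℂ) * (z.2 : ℂ))) *
      ((((1 + |z.1|) ^ r / (1 + |z.2 - z.1 ^ 3|) ^ κ : ℝ) : ℂ) * f z.1 z.2)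

/-- The mixed norm `‖u‖_{L^pₓ L^qₜ}` (with values in `ℝ≥0∞`). -/
def mixedNorm (p q : ℝ≥0∞) (u : ℝ → ℝ → ℂ) : ℝ≥0∞ :=
  if p = ∞ then essSup (fun x => eLpNorm (fun t => u x t) q volume) volume
  else (∫⁻ x : ℝ, (eLpNorm (fun t => u x t) q volume) ^ p.toReal) ^ (1 / p.toReal)

/-- For `κ > 1/2` and `s > 3κ`, `‖A^{-s} F_κ‖_{L²ₓL^∞ₜ} ≤ C ‖f‖_{L²}`. -/
theorem A_neg_s_Fk_L2x_Linftyt (κ s : ℝ) (hκ : 1 / 2 < κ) (hs : 3 * κ < s) :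
    ∃ C : ℝ≥0, 0 < C ∧ ∀ f : ℝ → ℝ → ℂ,
      MemLp (fun z : ℝ × ℝ => f z.1 z.2) 2 volume →
      mixedNorm 2 ∞ (AFk (-s) κ f)
        ≤ C * eLpNorm (fun z : ℝ × ℝ => f z.1 z.2) 2 volume := by
  have hκ0 : (0:ℝ) < κ := lt_trans (by norm_num) hκ
  have h2κ : (1:ℝ) < 2*κ := by linarith
  have hs0 : (0:ℝ) < s := by linarith
  have h2s : (1:ℝ) < 2*s := by linarith
  -- constants
  set Jκ : ℝ≥0∞ := ∫⁻ τ : ℝ, ENNReal.ofReal ((1+|τ|)^(-κ)) ^ (2:ℝ) with hJκdef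
  have hJκ : Jκ < ⊤ := by
    rw [hJκdef, show (fun τ : ℝ => ENNReal.ofReal ((1+|τ|)^(-κ)) ^ (2:ℝ))
      = fun τ : ℝ => ENNReal.ofReal ((1+|τ|)^(-(2*κ))) from
        funext fun τ => ofReal_rpow_sq (by positivity) κ]
    exact I_lt_top h2κ
  set c2 : ℝ≥0∞ := ENNReal.ofReal ((2*π)⁻¹) with hc2def
  set C0 : ℝ≥0∞ := (c2^(2:ℝ) * Jκ * ENNReal.ofReal (4*π)) ^ (1/2:ℝ) with hC0def
  have hc2sq_ne : c2^(2:ℝ) ≠ ⊤ := by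
    rw [hc2def, two_rpow]
    exact ENNReal.mul_ne_top ENNReal.ofReal_ne_top ENNReal.ofReal_ne_top
  have hCJ_ne : c2^(2:ℝ) * Jκ ≠ ⊤ := ENNReal.mul_ne_top hc2sq_ne hJκ.ne
  have hC0top : C0 ≠ ⊤ := by
    rw [hC0def]
    exact ENNReal.rpow_ne_top_of_nonneg (by norm_num)
      (ENNReal.mul_ne_top hCJ_ne ENNReal.ofReal_ne_top)
  refine ⟨C0.toNNReal + 1, lt_of_lt_of_le zero_lt_one le_add_self, fun f hf => ?_⟩
  have hCle : C0 ≤ ((C0.toNNReal + 1 : ℝ≥0) : ℝ≥0∞) := by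
    rw [ENNReal.coe_add, ENNReal.coe_one, ← ENNReal.coe_toNNReal hC0top]
    exact le_self_add
  -- the weight
  set W : ℝ × ℝ → ℝ := fun z => (1+|z.1|)^(-s) * (1+|z.2-z.1^3|)^(-κ) with hWdef
  have hWeq : ∀ z : ℝ × ℝ,
      ((1 + |z.1|) ^ (-s) / (1 + |z.2 - z.1 ^ 3|) ^ κ : ℝ) = W z := by
    intro z
    rw [hWdef, div_eq_mul_inv,
      ← Real.rpow_neg (by positivity : (0:ℝ) ≤ 1 + |z.2 - z.1^3|)]
  have hWnn : ∀ z, 0 ≤ W z := fun z => by rw [hWdef]; positivity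
  have hWle1 : ∀ z, W z ≤ 1 := by
    intro z
    rw [hWdef]
    have h1 : (1+|z.1|)^(-s) ≤ 1 :=
      Real.rpow_le_one_of_one_le_of_nonpos (le_add_of_nonneg_right (abs_nonneg _))
        (by linarith)
    have h2 : (1+|z.2-z.1^3|)^(-κ) ≤ 1 :=
      Real.rpow_le_one_of_one_le_of_nonpos (le_add_of_nonneg_right (abs_nonneg _))
        (by linarith)
    calc (1+|z.1|)^(-s) * (1+|z.2-z.1^3|)^(-κ) ≤ 1 * 1 :=
          mul_le_mul h1 h2 (by positivity) (by norm_num)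
      _ = 1 := by norm_num
  have hWc : Continuous W := by
    rw [hWdef]
    apply Continuous.mul
    · exact (continuous_const.add continuous_fst.abs).rpow_const
        (fun z => Or.inl (by positivity : (1:ℝ) + |z.1| ≠ 0))
    · exact (continuous_const.add (continuous_snd.sub (continuous_fst.pow 3)).abs).rpow_const
        (fun z => Or.inl (by positivity : (1:ℝ) + |z.2 - z.1^3| ≠ 0))
  -- L² bound for the weight
  have hWsq : ∀ z : ℝ × ℝ, ENNReal.ofReal (W z) ^ (2:ℝ)
      = ENNReal.ofReal ((1+|z.1|)^(-(2*s))) * ENNReal.ofReal ((1+|z.2-z.1^3|)^(-(2*κ))) := by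
    intro z
    rw [hWdef, ENNReal.ofReal_mul (by positivity),
      ENNReal.mul_rpow_of_nonneg _ _ (by norm_num : (0:ℝ) ≤ 2),
      ofReal_rpow_sq (by positivity) s, ofReal_rpow_sq (by positivity) κ]
  have hWl2 : ∫⁻ z : ℝ × ℝ, ENNReal.ofReal (W z) ^ (2:ℝ) < ⊤ := by
    have hm : Measurable fun z : ℝ × ℝ =>
        ENNReal.ofReal ((1+|z.1|)^(-(2*s))) * ENNReal.ofReal ((1+|z.2-z.1^3|)^(-(2*κ))) := by
      refine Measurable.mul (f := fun z : ℝ × ℝ => ENNReal.ofReal ((1+|z.1|)^(-(2*s))))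
        (g := fun z : ℝ × ℝ => ENNReal.ofReal ((1+|z.2-z.1^3|)^(-(2*κ)))) ?_ ?_
      · exact ((continuous_const.add continuous_fst.abs).rpow_const
          (fun z => Or.inl (by positivity : (1:ℝ) + |z.1| ≠ 0))).measurable.ennreal_ofReal
      · exact ((continuous_const.add (continuous_snd.sub (continuous_fst.pow 3)).abs).rpow_const
          (fun z => Or.inl (by positivity : (1:ℝ) + |z.2 - z.1^3| ≠ 0))).measurable.ennreal_ofReal
    simp_rw [hWsq]
    rw [show (volume : Measure (ℝ × ℝ)) = volume.prod volume from Measure.volume_eq_prod ℝ ℝ,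
      lintegral_prod _ hm.aemeasurable]
    have hinner : ∀ ξ : ℝ, ∫⁻ τ : ℝ,
        ENNReal.ofReal ((1+|ξ|)^(-(2*s))) * ENNReal.ofReal ((1+|τ-ξ^3|)^(-(2*κ)))
        = ENNReal.ofReal ((1+|ξ|)^(-(2*s))) * ∫⁻ u : ℝ, ENNReal.ofReal ((1+|u|)^(-(2*κ))) := by
      intro ξ
      rw [lintegral_const_mul' _ _ ENNReal.ofReal_ne_top]
      congr 1
      exact lintegral_sub_right_eq_self (fun u => ENNReal.ofReal ((1+|u|)^(-(2*κ)))) (ξ^3)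
    simp_rw [hinner]
    rw [lintegral_mul_const' _ _ (I_lt_top h2κ).ne]
    exact ENNReal.mul_lt_top (I_lt_top h2s) (I_lt_top h2κ)
  -- measurable representative
  set F : ℝ × ℝ → ℂ := fun z => f z.1 z.2 with hFdef
  set f₀ : ℝ × ℝ → ℂ := hf.1.mk F with hf₀def
  have hsm₀ : StronglyMeasurable f₀ := hf.1.stronglyMeasurable_mk
  have hae : F =ᵐ[volume] f₀ := hf.1.ae_eq_mk
  have hF2 : ∫⁻ z : ℝ × ℝ, (‖f₀ z‖₊ : ℝ≥0∞) ^ (2:ℝ) < ⊤ := by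
    have h1 : eLpNorm f₀ 2 volume < ⊤ := by
      rw [← eLpNorm_congr_ae hae]
      exact hf.2
    have h2 := (eLpNorm_lt_top_iff_lintegral_rpow_enorm_lt_top
      (by norm_num : (2:ℝ≥0∞) ≠ 0) (by norm_num : (2:ℝ≥0∞) ≠ ∞)).mp h1
    simpa [enorm_eq_nnnorm] using h2
  set g : ℝ × ℝ → ℂ := fun z => ((W z : ℝ) : ℂ) * f₀ z with hgdef
  have hgsm : StronglyMeasurable g :=
    ((Complex.continuous_ofReal.comp hWc).stronglyMeasurable).mul hsm₀
  have hgnn : ∀ z, (‖g z‖₊ : ℝ≥0∞) = ENNReal.ofReal (W z) * (‖f₀ z‖₊ : ℝ≥0∞) := by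
    intro z
    rw [hgdef]
    show (‖((W z : ℝ) : ℂ) * f₀ z‖₊ : ℝ≥0∞) = _
    rw [nnnorm_mul, ENNReal.coe_mul]
    congr 1
    rw [coe_nnnorm_eq, Complex.norm_real, Real.norm_eq_abs, _root_.abs_of_nonneg (hWnn z)]
  have hWm2 : Measurable fun z : ℝ × ℝ => ENNReal.ofReal (W z) :=
    hWc.measurable.ennreal_ofReal
  have hgHFI : HasFiniteIntegral g volume := by
    show (∫⁻ z : ℝ × ℝ, (‖g z‖₊ : ℝ≥0∞)) < ⊤
    calc ∫⁻ z : ℝ × ℝ, (‖g z‖₊ : ℝ≥0∞)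
        = ∫⁻ z : ℝ × ℝ, ENNReal.ofReal (W z) * (‖f₀ z‖₊ : ℝ≥0∞) := by
          congr 1; funext z; exact hgnn z
      _ ≤ (∫⁻ z : ℝ × ℝ, ENNReal.ofReal (W z) ^ (2:ℝ)) ^ (1/2:ℝ)
            * (∫⁻ z : ℝ × ℝ, (‖f₀ z‖₊ : ℝ≥0∞) ^ (2:ℝ)) ^ (1/2:ℝ) :=
          lint_CS hWm2.aemeasurable hsm₀.measurable.enorm.aemeasurable
      _ < ⊤ := ENNReal.mul_lt_top
          (ENNReal.rpow_lt_top_of_nonneg (by norm_num) hWl2.ne)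
          (ENNReal.rpow_lt_top_of_nonneg (by norm_num) hF2.ne)
  have hgL1 : Integrable g volume := ⟨hgsm.aestronglyMeasurable, hgHFI⟩
  -- rewrite AFk with the measurable representative
  have hAF : ∀ x t : ℝ, AFk (-s) κ f x t
      = ((2*π : ℝ) : ℂ)⁻¹ * ∫ z : ℝ × ℝ,
          Complex.exp (Complex.I * (↑x * ↑z.1 + ↑t * ↑z.2)) * g z := by
    intro x t
    rw [AFk]
    congr 1
    apply integral_congr_ae
    filter_upwards [hae] with z hz
    have hz' : f z.1 z.2 = f₀ z := hz
    rw [hWeq z, hz']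
  have hE : ∀ x t : ℝ, Integrable
      (fun z : ℝ × ℝ => Complex.exp (Complex.I * (↑x * ↑z.1 + ↑t * ↑z.2)) * g z) volume := by
    intro x t
    have hc : Continuous fun z : ℝ × ℝ =>
        Complex.exp (Complex.I * (↑x * ↑z.1 + ↑t * ↑z.2)) := by
      apply Complex.continuous_exp.comp
      apply continuous_const.mul
      exact ((continuous_const.mul (Complex.continuous_ofReal.comp continuous_fst)).add
        (continuous_const.mul (Complex.continuous_ofReal.comp continuous_snd)))
    refine ⟨(hc.stronglyMeasurable.mul hgsm).aestronglyMeasurable, ?_⟩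
    show (∫⁻ z : ℝ × ℝ, (‖_ * g z‖₊ : ℝ≥0∞)) < ⊤
    have : ∀ z : ℝ × ℝ, (‖Complex.exp (Complex.I * (↑x * ↑z.1 + ↑t * ↑z.2)) * g z‖₊ : ℝ≥0∞)
        = (‖g z‖₊ : ℝ≥0∞) := fun z => coe_nnnorm_exp_mul (norm_exp_I_mul2 x z.1 t z.2) _
    simp_rw [this]
    exact hgHFI
  -- partial Fourier transform in ξ
  set H : ℝ → ℝ → ℂ := fun x τ => ∫ ξ : ℝ, Complex.exp (Complex.I * (↑x * ↑ξ)) * g (ξ, τ)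
    with hHdef
  have hHq : StronglyMeasurable fun q : ℝ × ℝ => H q.1 q.2 := by
    apply MeasureTheory.StronglyMeasurable.integral_prod_right'
      (f := fun r : (ℝ × ℝ) × ℝ => Complex.exp (Complex.I * (↑r.1.1 * ↑r.2)) * g (r.2, r.1.2))
    refine StronglyMeasurable.mul ?_ ?_
    · apply Continuous.stronglyMeasurable
      apply Complex.continuous_exp.comp
      exact continuous_const.mul ((Complex.continuous_ofReal.comp (continuous_fst.fst)).mul
        (Complex.continuous_ofReal.comp continuous_snd))
    · exact hgsm.comp_measurable (measurable_snd.prodMk (measurable_fst.snd))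
  have hFub : ∀ x t : ℝ, AFk (-s) κ f x t
      = ((2*π : ℝ) : ℂ)⁻¹ * ∫ τ : ℝ, Complex.exp (Complex.I * (↑t * ↑τ)) * H x τ := by
    intro x t
    rw [hAF x t]
    congr 1
    have hEp : Integrable (Function.uncurry fun ξ τ : ℝ =>
        Complex.exp (Complex.I * (↑x * ↑ξ + ↑t * ↑τ)) * g (ξ, τ)) (volume.prod volume) := by
      have h := hE x t
      rwa [show (volume : Measure (ℝ × ℝ)) = volume.prod volume from Measure.volume_eq_prod ℝ ℝ]
        at h
    calc ∫ z : ℝ × ℝ, Complex.exp (Complex.I * (↑x * ↑z.1 + ↑t * ↑z.2)) * g z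
        = ∫ ξ : ℝ, ∫ τ : ℝ, Complex.exp (Complex.I * (↑x * ↑ξ + ↑t * ↑τ)) * g (ξ, τ) := by
          rw [show (volume : Measure (ℝ × ℝ)) = volume.prod volume from
            Measure.volume_eq_prod ℝ ℝ]
          exact integral_prod _ hEp
      _ = ∫ τ : ℝ, ∫ ξ : ℝ, Complex.exp (Complex.I * (↑x * ↑ξ + ↑t * ↑τ)) * g (ξ, τ) :=
          integral_integral_swap hEp
      _ = ∫ τ : ℝ, Complex.exp (Complex.I * (↑t * ↑τ)) * H x τ := by
          congr 1; funext τ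
          rw [hHdef]
          show _ = Complex.exp (Complex.I * (↑t * ↑τ)) *
            ∫ ξ : ℝ, Complex.exp (Complex.I * (↑x * ↑ξ)) * g (ξ, τ)
          rw [← integral_const_mul]
          congr 1; funext ξ
          have hsplit : Complex.exp (Complex.I * (↑x * ↑ξ + ↑t * ↑τ))
              = Complex.exp (Complex.I * (↑t * ↑τ)) * Complex.exp (Complex.I * (↑x * ↑ξ)) := by
            rw [← Complex.exp_add]
            congr 1
            ring
          rw [hsplit]
          ring
  -- Cauchy–Schwarz in τ
  set Φ : ℝ → ℝ≥0∞ := fun x =>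
    ∫⁻ τ : ℝ, (ENNReal.ofReal ((1+|τ|)^κ) * (‖H x τ‖₊ : ℝ≥0∞)) ^ (2:ℝ) with hΦdef
  have hmκ : Continuous fun τ : ℝ => (1+|τ|)^κ :=
    (continuous_const.add _root_.continuous_abs).rpow_const (fun τ => Or.inl (by positivity : (1:ℝ) + |τ| ≠ 0))
  have hCS : ∀ x t : ℝ, (‖AFk (-s) κ f x t‖₊ : ℝ≥0∞)
      ≤ c2 * (Jκ ^ (1/2:ℝ) * (Φ x) ^ (1/2:ℝ)) := by
    intro x t
    rw [hFub x t]
    have hnorm_c : (‖((2*π : ℝ) : ℂ)⁻¹‖₊ : ℝ≥0∞) = c2 := by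
      rw [coe_nnnorm_eq, norm_inv, Complex.norm_real, Real.norm_eq_abs,
        _root_.abs_of_nonneg (by positivity : (0:ℝ) ≤ 2*π), hc2def]
    calc (‖((2*π : ℝ) : ℂ)⁻¹ * ∫ τ : ℝ, Complex.exp (Complex.I * (↑t * ↑τ)) * H x τ‖₊ : ℝ≥0∞)
        = c2 * (‖∫ τ : ℝ, Complex.exp (Complex.I * (↑t * ↑τ)) * H x τ‖₊ : ℝ≥0∞) := by
          rw [nnnorm_mul, ENNReal.coe_mul, hnorm_c]
      _ ≤ c2 * ∫⁻ τ : ℝ, (‖Complex.exp (Complex.I * (↑t * ↑τ)) * H x τ‖₊ : ℝ≥0∞) :=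
          mul_le_mul' le_rfl (enorm_integral_le_lintegral_enorm _)
      _ = c2 * ∫⁻ τ : ℝ, (‖H x τ‖₊ : ℝ≥0∞) := by
          congr 1
          congr 1; funext τ
          exact coe_nnnorm_exp_mul (norm_exp_I_mul' t τ) _
      _ ≤ c2 * (Jκ ^ (1/2:ℝ) * (Φ x) ^ (1/2:ℝ)) := by
          apply mul_le_mul' le_rfl
          have hone : ∀ τ : ℝ, (‖H x τ‖₊ : ℝ≥0∞)
              = ENNReal.ofReal ((1+|τ|)^(-κ))
                * (ENNReal.ofReal ((1+|τ|)^κ) * (‖H x τ‖₊ : ℝ≥0∞)) := by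
            intro τ
            rw [← mul_assoc, ← ENNReal.ofReal_mul (by positivity),
              ← Real.rpow_add (by positivity)]
            simp
          calc ∫⁻ τ : ℝ, (‖H x τ‖₊ : ℝ≥0∞)
              = ∫⁻ τ : ℝ, ENNReal.ofReal ((1+|τ|)^(-κ))
                  * (ENNReal.ofReal ((1+|τ|)^κ) * (‖H x τ‖₊ : ℝ≥0∞)) := by
                congr 1; funext τ; exact hone τ
            _ ≤ Jκ ^ (1/2:ℝ) * (Φ x) ^ (1/2:ℝ) := by
                rw [hJκdef, hΦdef]
                apply lint_CS
                · exact ((continuous_const.add _root_.continuous_abs).rpow_const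
                    (fun τ => Or.inl (by positivity : (1:ℝ) + |τ| ≠ 0))).measurable.ennreal_ofReal.aemeasurable
                · exact (hmκ.measurable.ennreal_ofReal.mul
                    ((hHq.measurable.comp measurable_prodMk_left).enorm)).aemeasurable
  have hsup : ∀ x : ℝ, eLpNorm (fun t => AFk (-s) κ f x t) ∞ volume
      ≤ c2 * (Jκ ^ (1/2:ℝ) * (Φ x) ^ (1/2:ℝ)) := by
    intro x
    rw [eLpNorm_exponent_top]
    refine essSup_le_of_ae_le _ (ae_of_all _ fun t => hCS x t)
  -- the key planch bound, slice by slice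
  have perτ : ∀ τ : ℝ, ∫⁻ x : ℝ, (‖H x τ‖₊ : ℝ≥0∞) ^ (2:ℝ)
      ≤ ENNReal.ofReal (4*π) * ∫⁻ ξ : ℝ, (‖g (ξ, τ)‖₊ : ℝ≥0∞) ^ (2:ℝ) := by
    intro τ
    have hgτsm : StronglyMeasurable fun ξ : ℝ => g (ξ, τ) :=
      hgsm.comp_measurable (measurable_id.prodMk measurable_const)
    by_cases hI : Integrable (fun ξ : ℝ => g (ξ, τ)) volume
    · exact planch hgτsm hI
    · have hz : ∀ x : ℝ, H x τ = 0 := by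
        intro x
        apply integral_undef
        intro hcon
        apply hI
        have h1 : Integrable (fun ξ : ℝ => ‖g (ξ, τ)‖) volume := by
          refine hcon.norm.congr (ae_of_all _ fun ξ => ?_)
          show ‖Complex.exp (Complex.I * (↑x * ↑ξ)) * g (ξ, τ)‖ = ‖g (ξ, τ)‖
          rw [norm_mul, norm_exp_I_mul' x ξ, one_mul]
        exact (integrable_norm_iff hgτsm.aestronglyMeasurable).mp h1
      simp_rw [hz]
      simp only [nnnorm_zero, ENNReal.coe_zero]
      rw [ENNReal.zero_rpow_of_pos (by norm_num)]
      simp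
  -- summing up
  have hwt2 : ∀ (ξ τ : ℝ),
      (ENNReal.ofReal ((1+|τ|)^κ)) ^ (2:ℝ) * (‖g (ξ, τ)‖₊ : ℝ≥0∞) ^ (2:ℝ)
        ≤ (‖f₀ (ξ, τ)‖₊ : ℝ≥0∞) ^ (2:ℝ) := by
    intro ξ τ
    rw [← ENNReal.mul_rpow_of_nonneg _ _ (by norm_num : (0:ℝ) ≤ 2)]
    apply ENNReal.rpow_le_rpow _ (by norm_num)
    rw [hgnn (ξ, τ), ← mul_assoc, ← ENNReal.ofReal_mul (by positivity)]
    calc ENNReal.ofReal ((1+|τ|)^κ * W (ξ, τ)) * (‖f₀ (ξ, τ)‖₊ : ℝ≥0∞)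
        ≤ 1 * (‖f₀ (ξ, τ)‖₊ : ℝ≥0∞) := by
          apply mul_le_mul' _ le_rfl
          apply ENNReal.ofReal_le_one.mpr
          exact wt hκ0 hs.le ξ τ
      _ = _ := one_mul _
  have hjm : Measurable fun q : ℝ × ℝ =>
      (ENNReal.ofReal ((1+|q.2|)^κ) * (‖H q.1 q.2‖₊ : ℝ≥0∞)) ^ (2:ℝ) := by
    apply Measurable.pow_const
    exact ((hmκ.comp continuous_snd).measurable.ennreal_ofReal).mul hHq.measurable.enorm
  have hΦint : ∫⁻ x : ℝ, Φ x
      ≤ ENNReal.ofReal (4*π) * ∫⁻ z : ℝ × ℝ, (‖f₀ z‖₊ : ℝ≥0∞) ^ (2:ℝ) := by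
    have hswap : ∫⁻ x : ℝ, Φ x = ∫⁻ τ : ℝ, ∫⁻ x : ℝ,
        (ENNReal.ofReal ((1+|τ|)^κ) * (‖H x τ‖₊ : ℝ≥0∞)) ^ (2:ℝ) := by
      rw [hΦdef]
      exact lintegral_lintegral_swap hjm.aemeasurable
    rw [hswap]
    have hmono : ∀ τ : ℝ, ∫⁻ x : ℝ,
        (ENNReal.ofReal ((1+|τ|)^κ) * (‖H x τ‖₊ : ℝ≥0∞)) ^ (2:ℝ)
        ≤ ENNReal.ofReal (4*π) * ∫⁻ ξ : ℝ,
            (ENNReal.ofReal ((1+|τ|)^κ)) ^ (2:ℝ) * (‖g (ξ, τ)‖₊ : ℝ≥0∞) ^ (2:ℝ) := by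
      intro τ
      have hmτ_ne : (ENNReal.ofReal ((1+|τ|)^κ)) ^ (2:ℝ) ≠ ⊤ :=
        ENNReal.rpow_ne_top_of_nonneg (by norm_num) ENNReal.ofReal_ne_top
      calc ∫⁻ x : ℝ, (ENNReal.ofReal ((1+|τ|)^κ) * (‖H x τ‖₊ : ℝ≥0∞)) ^ (2:ℝ)
          = (ENNReal.ofReal ((1+|τ|)^κ)) ^ (2:ℝ)
              * ∫⁻ x : ℝ, (‖H x τ‖₊ : ℝ≥0∞) ^ (2:ℝ) := by
            rw [← lintegral_const_mul' _ _ hmτ_ne]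
            congr 1; funext x
            rw [ENNReal.mul_rpow_of_nonneg _ _ (by norm_num : (0:ℝ) ≤ 2)]
        _ ≤ (ENNReal.ofReal ((1+|τ|)^κ)) ^ (2:ℝ)
              * (ENNReal.ofReal (4*π) * ∫⁻ ξ : ℝ, (‖g (ξ, τ)‖₊ : ℝ≥0∞) ^ (2:ℝ)) :=
            mul_le_mul' le_rfl (perτ τ)
        _ = ENNReal.ofReal (4*π) * ((ENNReal.ofReal ((1+|τ|)^κ)) ^ (2:ℝ)
              * ∫⁻ ξ : ℝ, (‖g (ξ, τ)‖₊ : ℝ≥0∞) ^ (2:ℝ)) := by ring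
        _ = ENNReal.ofReal (4*π) * ∫⁻ ξ : ℝ,
              (ENNReal.ofReal ((1+|τ|)^κ)) ^ (2:ℝ) * (‖g (ξ, τ)‖₊ : ℝ≥0∞) ^ (2:ℝ) := by
            rw [← lintegral_const_mul' _ _ hmτ_ne]
    calc ∫⁻ τ : ℝ, ∫⁻ x : ℝ, (ENNReal.ofReal ((1+|τ|)^κ) * (‖H x τ‖₊ : ℝ≥0∞)) ^ (2:ℝ)
        ≤ ∫⁻ τ : ℝ, ENNReal.ofReal (4*π) * ∫⁻ ξ : ℝ,
            (ENNReal.ofReal ((1+|τ|)^κ)) ^ (2:ℝ) * (‖g (ξ, τ)‖₊ : ℝ≥0∞) ^ (2:ℝ) :=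
          lintegral_mono fun τ => hmono τ
      _ = ENNReal.ofReal (4*π) * ∫⁻ τ : ℝ, ∫⁻ ξ : ℝ,
            (ENNReal.ofReal ((1+|τ|)^κ)) ^ (2:ℝ) * (‖g (ξ, τ)‖₊ : ℝ≥0∞) ^ (2:ℝ) :=
          lintegral_const_mul' _ _ ENNReal.ofReal_ne_top
      _ ≤ ENNReal.ofReal (4*π) * ∫⁻ τ : ℝ, ∫⁻ ξ : ℝ, (‖f₀ (ξ, τ)‖₊ : ℝ≥0∞) ^ (2:ℝ) := by
          apply mul_le_mul' le_rfl
          apply lintegral_mono fun τ => ?_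
          apply lintegral_mono fun ξ => hwt2 ξ τ
      _ = ENNReal.ofReal (4*π) * ∫⁻ z : ℝ × ℝ, (‖f₀ z‖₊ : ℝ≥0∞) ^ (2:ℝ) := by
          congr 1
          rw [show (volume : Measure (ℝ × ℝ)) = volume.prod volume from
            Measure.volume_eq_prod ℝ ℝ]
          exact (lintegral_prod_symm _
            (hsm₀.measurable.enorm.pow_const _).aemeasurable).symm
  -- final computation
  have hmix : mixedNorm 2 ∞ (AFk (-s) κ f)
      = (∫⁻ x : ℝ, (eLpNorm (fun t => AFk (-s) κ f x t) ∞ volume) ^ (2:ℝ)) ^ (1/2:ℝ) := by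
    rw [mixedNorm, if_neg (by simp : (2:ℝ≥0∞) ≠ ∞)]
    norm_num
  rw [hmix]
  have hfin : eLpNorm (fun z : ℝ × ℝ => f z.1 z.2) 2 volume
      = (∫⁻ z : ℝ × ℝ, (‖f₀ z‖₊ : ℝ≥0∞) ^ (2:ℝ)) ^ (1/2:ℝ) := by
    rw [show (fun z : ℝ × ℝ => f z.1 z.2) = F from rfl, eLpNorm_congr_ae hae,
      eLpNorm_eq_lintegral_rpow_enorm_toReal (by norm_num : (2:ℝ≥0∞) ≠ 0)
        (by norm_num : (2:ℝ≥0∞) ≠ ∞)]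
    norm_num [enorm_eq_nnnorm]
  calc (∫⁻ x : ℝ, (eLpNorm (fun t => AFk (-s) κ f x t) ∞ volume) ^ (2:ℝ)) ^ (1/2:ℝ)
      ≤ (∫⁻ x : ℝ, (c2 * (Jκ ^ (1/2:ℝ) * (Φ x) ^ (1/2:ℝ))) ^ (2:ℝ)) ^ (1/2:ℝ) := by
        apply ENNReal.rpow_le_rpow _ (by norm_num)
        exact lintegral_mono fun x => ENNReal.rpow_le_rpow (hsup x) (by norm_num)
    _ = ((c2 ^ (2:ℝ) * Jκ) * ∫⁻ x : ℝ, Φ x) ^ (1/2:ℝ) := by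
        congr 1
        have hpt : ∀ x : ℝ, (c2 * (Jκ ^ (1/2:ℝ) * (Φ x) ^ (1/2:ℝ))) ^ (2:ℝ)
            = (c2 ^ (2:ℝ) * Jκ) * Φ x := by
          intro x
          rw [ENNReal.mul_rpow_of_nonneg _ _ (by norm_num : (0:ℝ) ≤ 2),
            ENNReal.mul_rpow_of_nonneg _ _ (by norm_num : (0:ℝ) ≤ 2),
            ← ENNReal.rpow_mul Jκ, ← ENNReal.rpow_mul (Φ x)]
          norm_num [mul_assoc]
        simp_rw [hpt]
        exact lintegral_const_mul' _ _ hCJ_ne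
    _ ≤ ((c2 ^ (2:ℝ) * Jκ) * (ENNReal.ofReal (4*π)
          * ∫⁻ z : ℝ × ℝ, (‖f₀ z‖₊ : ℝ≥0∞) ^ (2:ℝ))) ^ (1/2:ℝ) :=
        ENNReal.rpow_le_rpow (mul_le_mul' le_rfl hΦint) (by norm_num)
    _ = C0 * (∫⁻ z : ℝ × ℝ, (‖f₀ z‖₊ : ℝ≥0∞) ^ (2:ℝ)) ^ (1/2:ℝ) := by
        rw [hC0def, ← ENNReal.mul_rpow_of_nonneg _ _ (by norm_num : (0:ℝ) ≤ 1/2)]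
        congr 1
        ring
    _ ≤ ((C0.toNNReal + 1 : ℝ≥0) : ℝ≥0∞) * eLpNorm (fun z : ℝ × ℝ => f z.1 z.2) 2 volume := by
        rw [hfin]
        exact mul_le_mul' hCle le_rfl

end
end

section
/- Let κ > 1/2 and s > 1/2. There is a constant C (depending on κ and s) such that for all f ∈ L²(ℝ²), the function F_κ defined by F̂_κ(ξ,τ) = f(ξ,τ)/(1+|τ−ξ³|)^κ satisfies ‖A^{−s} F_κ‖_{L^∞ₓ L^∞ₜ} ≤ C ‖f‖_{L²_ξ L²_τ}. -/
noncomputable section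
open MeasureTheory Real Set
open scoped ENNReal NNReal

/-- For `κ > 1/2` and `s > 1/2`, `‖A^{-s} F_κ‖_{L^∞ₓL^∞ₜ} ≤ C ‖f‖_{L²}`. -/
theorem A_neg_s_Fk_Linftyx_Linftyt (κ s : ℝ) (hκ : 1 / 2 < κ) (hs : 1 / 2 < s) :
    ∃ C : ℝ≥0, 0 < C ∧ ∀ f : ℝ → ℝ → ℂ,
      MemLp (fun z : ℝ × ℝ => f z.1 z.2) 2 volume →
      mixedNorm ∞ ∞ (AFk (-s) κ f)
        ≤ C * eLpNorm (fun z : ℝ × ℝ => f z.1 z.2) 2 volume := by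
  -- The weight `w(ξ,τ) = (1+|ξ|)^{-s} (1+|τ-ξ³|)^{-κ}`.
  set w : ℝ × ℝ → ℝ := fun z => (1 + |z.1|) ^ (-s) / (1 + |z.2 - z.1 ^ 3|) ^ κ with hwdef
  have hwm : Measurable w := by fun_prop
  have hwsq : ∀ z : ℝ × ℝ, ((‖w z‖₊ : ℝ≥0∞)) ^ (2:ℝ)
      = ENNReal.ofReal ((1 + |z.1|) ^ (-(2*s)) * (1 + |z.2 - z.1 ^ 3|) ^ (-(2*κ))) := by
    intro z
    have ha : (0:ℝ) < 1 + |z.1| := by positivity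
    have hb : (0:ℝ) < 1 + |z.2 - z.1 ^ 3| := by positivity
    rw [hwdef]
    rw [← enorm_eq_nnnorm, Real.enorm_eq_ofReal (by positivity),
      ENNReal.ofReal_rpow_of_nonneg (by positivity) (by norm_num)]
    congr 1
    rw [Real.div_rpow (by positivity) (by positivity), ← Real.rpow_mul ha.le,
      ← Real.rpow_mul hb.le, div_eq_mul_inv, ← Real.rpow_neg hb.le]
    ring_nf
  -- Finiteness of `‖w‖_{L²}`.
  have hfin : ∫⁻ z : ℝ × ℝ, ((‖w z‖₊ : ℝ≥0∞)) ^ (2:ℝ) < ∞ := by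
    simp_rw [hwsq]
    have hg : Integrable (fun x : ℝ => (1+|x|) ^ (-(2*s))) := by
      have : ((Module.finrank ℝ ℝ : ℝ)) < 2*s := by
        rw [Module.finrank_self]; push_cast; linarith
      simpa using integrable_one_add_norm (E := ℝ) this
    have hh : Integrable (fun x : ℝ => (1+|x|) ^ (-(2*κ))) := by
      have : ((Module.finrank ℝ ℝ : ℝ)) < 2*κ := by
        rw [Module.finrank_self]; push_cast; linarith
      simpa using integrable_one_add_norm (E := ℝ) this
    have hhm : Measurable (fun x : ℝ => ENNReal.ofReal ((1+|x|) ^ (-(2*κ)))) := by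
      fun_prop
    have key : ∫⁻ z : ℝ × ℝ, ENNReal.ofReal ((1+|z.1|) ^ (-(2*s)) * (1+|z.2 - z.1^3|) ^ (-(2*κ)))
        = (∫⁻ x : ℝ, ENNReal.ofReal ((1+|x|) ^ (-(2*s)))) *
          (∫⁻ x : ℝ, ENNReal.ofReal ((1+|x|) ^ (-(2*κ)))) := by
      rw [Measure.volume_eq_prod, lintegral_prod]
      · have : ∀ x : ℝ, ∫⁻ y : ℝ, ENNReal.ofReal ((1+|x|) ^ (-(2*s)) * (1+|y - x^3|) ^ (-(2*κ)))
            = ENNReal.ofReal ((1+|x|) ^ (-(2*s))) *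
              ∫⁻ x : ℝ, ENNReal.ofReal ((1+|x|) ^ (-(2*κ))) := by
          intro x
          have h1 : ∀ y : ℝ, ENNReal.ofReal ((1+|x|) ^ (-(2*s)) * (1+|y - x^3|) ^ (-(2*κ)))
              = ENNReal.ofReal ((1+|x|) ^ (-(2*s))) *
                ENNReal.ofReal ((1+|y - x^3|) ^ (-(2*κ))) := by
            intro y; exact ENNReal.ofReal_mul (by positivity)
          simp_rw [h1]
          rw [lintegral_const_mul' _ _ ENNReal.ofReal_ne_top]
          congr 1
          exact (measurePreserving_sub_right volume (x^3)).lintegral_comp hhm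
        simp_rw [this]
        rw [lintegral_mul_const']
        exact ((hasFiniteIntegral_iff_ofReal (ae_of_all _ fun x => by positivity)).mp hh.2).ne
      · fun_prop
    rw [key]
    exact ENNReal.mul_lt_top
      ((hasFiniteIntegral_iff_ofReal (ae_of_all _ fun x => by positivity)).mp hg.2)
      ((hasFiniteIntegral_iff_ofReal (ae_of_all _ fun x => by positivity)).mp hh.2)
  set W : ℝ≥0∞ := (∫⁻ z : ℝ × ℝ, ((‖w z‖₊ : ℝ≥0∞)) ^ (2:ℝ)) ^ (1/(2:ℝ)) with hWdef
  have hWfin : W ≠ ∞ := by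
    rw [hWdef]; exact (ENNReal.rpow_lt_top_of_nonneg (by norm_num) hfin.ne).ne
  set K : ℝ≥0∞ := ENNReal.ofReal ((2*Real.pi)⁻¹) * W with hKdef
  have hKfin : K ≠ ∞ := ENNReal.mul_ne_top ENNReal.ofReal_ne_top hWfin
  refine ⟨K.toNNReal + 1, by positivity, ?_⟩
  intro f hf
  have hKC : K ≤ ((K.toNNReal + 1 : ℝ≥0) : ℝ≥0∞) := by
    rw [ENNReal.coe_add, ENNReal.coe_toNNReal hKfin]
    exact le_self_add
  -- The pointwise bound via Cauchy–Schwarz.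
  have hpt : ∀ x t : ℝ, (‖AFk (-s) κ f x t‖₊ : ℝ≥0∞)
      ≤ K * eLpNorm (fun z : ℝ × ℝ => f z.1 z.2) 2 volume := by
    intro x t
    have hnorm1 : ∀ z : ℝ × ℝ,
        (‖Complex.exp (Complex.I * ((x : ℂ) * (z.1 : ℂ) + (t : ℂ) * (z.2 : ℂ))) *
          ((((1 + |z.1|) ^ (-s) / (1 + |z.2 - z.1 ^ 3|) ^ κ : ℝ) : ℂ) * f z.1 z.2)‖₊ : ℝ≥0∞)
        = (‖w z‖₊ : ℝ≥0∞) * (‖f z.1 z.2‖₊ : ℝ≥0∞) := by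
      intro z
      have hθ : (x : ℂ) * (z.1 : ℂ) + (t : ℂ) * (z.2 : ℂ) = ((x*z.1 + t*z.2 : ℝ) : ℂ) := by
        push_cast; ring
      have he : ‖Complex.exp (Complex.I * ((x : ℂ) * (z.1 : ℂ) + (t : ℂ) * (z.2 : ℂ)))‖₊ = 1 := by
        have : ‖Complex.exp (Complex.I * ((x : ℂ) * (z.1 : ℂ) + (t : ℂ) * (z.2 : ℂ)))‖ = 1 := by
          rw [hθ, mul_comm, Complex.norm_exp_ofReal_mul_I]
        ext; simpa using this
      rw [nnnorm_mul, nnnorm_mul, he, one_mul, ENNReal.coe_mul]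
      congr 2
      exact Complex.nnnorm_real _
    have hstep : (∫⁻ z : ℝ × ℝ, (‖w z‖₊ : ℝ≥0∞) * (‖f z.1 z.2‖₊ : ℝ≥0∞))
        ≤ W * eLpNorm (fun z : ℝ × ℝ => f z.1 z.2) 2 volume := by
      have hH := ENNReal.lintegral_mul_le_Lp_mul_Lq volume
        (p := 2) (q := 2) Real.HolderConjugate.two_two
        hwm.enorm.aemeasurable hf.aestronglyMeasurable.aemeasurable.enorm
      have hsnorm : (∫⁻ z : ℝ × ℝ, (‖f z.1 z.2‖₊ : ℝ≥0∞) ^ (2:ℝ)) ^ (1/(2:ℝ))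
          = eLpNorm (fun z : ℝ × ℝ => f z.1 z.2) 2 volume := by
        rw [eLpNorm_eq_lintegral_rpow_enorm_toReal two_ne_zero ENNReal.ofNat_ne_top]
        norm_num
        rfl
      calc (∫⁻ z : ℝ × ℝ, (‖w z‖₊ : ℝ≥0∞) * (‖f z.1 z.2‖₊ : ℝ≥0∞))
          ≤ (∫⁻ z : ℝ × ℝ, ((‖w z‖₊ : ℝ≥0∞)) ^ (2:ℝ)) ^ (1/(2:ℝ)) *
            (∫⁻ z : ℝ × ℝ, (‖f z.1 z.2‖₊ : ℝ≥0∞) ^ (2:ℝ)) ^ (1/(2:ℝ)) := hH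
        _ = W * eLpNorm (fun z : ℝ × ℝ => f z.1 z.2) 2 volume := by
            rw [hWdef, hsnorm]
    have hc : (‖(((2 * Real.pi : ℝ) : ℂ))⁻¹‖₊ : ℝ≥0∞) = ENNReal.ofReal (2*Real.pi)⁻¹ := by
      rw [← Complex.ofReal_inv, Complex.nnnorm_real,
        ← enorm_eq_nnnorm, Real.enorm_eq_ofReal (by positivity)]
    calc (‖AFk (-s) κ f x t‖₊ : ℝ≥0∞)
        = (‖(((2 * Real.pi : ℝ) : ℂ))⁻¹‖₊ : ℝ≥0∞) *
          (‖∫ z : ℝ × ℝ, Complex.exp (Complex.I * ((x : ℂ) * (z.1 : ℂ) + (t : ℂ) * (z.2 : ℂ))) *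
            ((((1 + |z.1|) ^ (-s) / (1 + |z.2 - z.1 ^ 3|) ^ κ : ℝ) : ℂ) * f z.1 z.2)‖₊ : ℝ≥0∞) := by
          rw [AFk, nnnorm_mul, ENNReal.coe_mul]
      _ ≤ (‖(((2 * Real.pi : ℝ) : ℂ))⁻¹‖₊ : ℝ≥0∞) *
          ∫⁻ z : ℝ × ℝ, (‖Complex.exp (Complex.I * ((x : ℂ) * (z.1 : ℂ) + (t : ℂ) * (z.2 : ℂ))) *
            ((((1 + |z.1|) ^ (-s) / (1 + |z.2 - z.1 ^ 3|) ^ κ : ℝ) : ℂ) * f z.1 z.2)‖₊ : ℝ≥0∞) :=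
          mul_le_mul_right (enorm_integral_le_lintegral_enorm _) _
      _ = ENNReal.ofReal (2*Real.pi)⁻¹ *
          ∫⁻ z : ℝ × ℝ, (‖w z‖₊ : ℝ≥0∞) * (‖f z.1 z.2‖₊ : ℝ≥0∞) := by
          rw [hc, lintegral_congr hnorm1]
      _ ≤ ENNReal.ofReal (2*Real.pi)⁻¹ *
          (W * eLpNorm (fun z : ℝ × ℝ => f z.1 z.2) 2 volume) := mul_le_mul_right hstep _
      _ = K * eLpNorm (fun z : ℝ × ℝ => f z.1 z.2) 2 volume := by rw [hKdef, mul_assoc]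
  rw [mixedNorm, if_pos rfl]
  refine essSup_le_of_ae_le _ (ae_of_all _ fun x => ?_)
  dsimp only
  rw [eLpNorm_exponent_top, eLpNormEssSup]
  refine essSup_le_of_ae_le _ (ae_of_all _ fun t => ?_)
  exact le_trans (hpt x t) (mul_le_mul_left hKC _)
end
end

section
/- Suppose y, x, d ≥ 0 and a > 0 satisfy y ≤ x + d ρ^{1/2} y^{2p+1} with ρ = a²/(d² x^{4p} 2^{4p}) and x > 0, where p ≥ 1 is an integer. Then the quantity h = y/(2x) satisfies h(1 − a h^{2p}) ≤ 1/2; consequently, for a > 0 chosen sufficiently small (depending only on p) there exist constants m′ and M′ with 1/2 < m′ < 1 < M′ such that either h ≤ m′ or h ≥ M′. In particular, if in addition y depends continuously on a parameter T ≥ 1 and h ≤ m′ at T = 1, then h ≤ m′ for all T ≥ 1 and hence y(T) ≤ 2x(T) for all T ≥ 1. -/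
open Set

/-!
Since `d ρ^{1/2} ≤ a / (2x)^{2p}`, the hypothesis gives `h ≤ 1/2 + a h^{2p+1}` for `h = y/(2x)`.
For `a ≤ 2^{-2p}/8` the function `h (1 - a h^{2p})` exceeds `1/2` on `(3/4, 2)`, so `h` never
enters that gap; a continuous `h` that starts below `3/4` therefore stays below it, by the
intermediate value theorem.
-/

-- Equality for `0 < d`; at `d = 0` the left side is `0` (Lean's `a² / 0 = 0`).
theorem mul_rpow_half_le {d a x : ℝ} (p : ℕ) (hd : 0 ≤ d) (ha : 0 ≤ a) (hx : 0 < x) :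
    d * (a ^ 2 / (d ^ 2 * x ^ (4 * p) * 2 ^ (4 * p))) ^ ((1 : ℝ) / 2) ≤ a / (2 * x) ^ (2 * p) := by
  have hsq : a ^ 2 / (d ^ 2 * x ^ (4 * p) * 2 ^ (4 * p)) = (a / (d * (2 * x) ^ (2 * p))) ^ 2 := by
    ring
  rw [hsq, ← Real.sqrt_eq_rpow, Real.sqrt_sq (by positivity)]
  rcases hd.eq_or_lt with rfl | hd
  · simp only [zero_mul]; positivity
  · rw [mul_div_assoc', mul_div_mul_left _ _ hd.ne']

theorem mul_one_sub_le_half_of_le_add (p : ℕ) {a x y d : ℝ} (ha : 0 ≤ a) (hx : 0 < x)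
    (hy : 0 ≤ y) (hd : 0 ≤ d)
    (h : y ≤ x + d * (a ^ 2 / (d ^ 2 * x ^ (4 * p) * 2 ^ (4 * p))) ^ ((1 : ℝ) / 2) *
        y ^ (2 * p + 1)) :
    (y / (2 * x)) * (1 - a * (y / (2 * x)) ^ (2 * p)) ≤ 1 / 2 := by
  have hcoef := mul_le_mul_of_nonneg_right (mul_rpow_half_le p hd ha hx)
    (pow_nonneg hy (2 * p + 1))
  have h2x : 0 < 2 * x := by positivity
  have hexpand : (y / (2 * x)) * (1 - a * (y / (2 * x)) ^ (2 * p))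
      = (y - a / (2 * x) ^ (2 * p) * y ^ (2 * p + 1)) / (2 * x) := by
    rw [div_pow]; field_simp; ring
  rw [hexpand, div_le_iff₀ h2x]
  linarith

theorem le_three_quarters_or_two_le (n : ℕ) {a h : ℝ} (ha₀ : a ≤ 1 / (8 * 2 ^ n))
    (hh : 0 ≤ h) (hf : h * (1 - a * h ^ n) ≤ 1 / 2) : h ≤ 3 / 4 ∨ 2 ≤ h := by
  by_contra! hmid
  have hsmall : a * h ^ n ≤ 1 / 8 := calc
    a * h ^ n ≤ 1 / (8 * 2 ^ n) * 2 ^ n := by gcongr; exact hmid.2.le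
    _ = 1 / 8 := by field_simp
  nlinarith [hmid.1]

theorem ContinuousOn.le_of_forall_le_or_le {X : Type*} [TopologicalSpace X] {s : Set X}
    {g : X → ℝ} {m M : ℝ} {t₀ : X} (hg : ContinuousOn g s) (hs : IsPreconnected s) (ht₀ : t₀ ∈ s)
    (hmM : m < M) (hgap : ∀ t ∈ s, g t ≤ m ∨ M ≤ g t) (hstart : g t₀ ≤ m) :
    ∀ t ∈ s, g t ≤ m := by
  intro t ht
  by_contra! hlarge
  obtain ⟨c, hc, hgc⟩ := hs.intermediate_value ht₀ ht hg
    (show (m + M) / 2 ∈ Icc (g t₀) (g t) by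
      constructor <;> linarith [(hgap t ht).resolve_left hlarge.not_ge])
  rcases hgap c hc with h | h <;> linarith

theorem bootstrap_argument_general (p : ℕ) :
    (∀ a x y d : ℝ, 0 < a → 0 < x → 0 ≤ y → 0 ≤ d →
        y ≤ x + d * (a ^ 2 / (d ^ 2 * x ^ (4 * p) * 2 ^ (4 * p))) ^ ((1 : ℝ) / 2) *
              y ^ (2 * p + 1) →
        (y / (2 * x)) * (1 - a * (y / (2 * x)) ^ (2 * p)) ≤ 1 / 2) ∧
    ∃ a₀ > (0 : ℝ), ∀ a : ℝ, 0 < a → a ≤ a₀ →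
      ∃ m' M' : ℝ, 1 / 2 < m' ∧ m' < 1 ∧ 1 < M' ∧
        (∀ x y d : ℝ, 0 < x → 0 ≤ y → 0 ≤ d →
            y ≤ x + d * (a ^ 2 / (d ^ 2 * x ^ (4 * p) * 2 ^ (4 * p))) ^ ((1 : ℝ) / 2) *
                  y ^ (2 * p + 1) →
            y / (2 * x) ≤ m' ∨ M' ≤ y / (2 * x)) ∧
        (∀ x y d : ℝ → ℝ,
            ContinuousOn x (Set.Ici (1 : ℝ)) → ContinuousOn y (Set.Ici (1 : ℝ)) →
            (∀ T ≥ (1 : ℝ), 0 < x T ∧ 0 ≤ y T ∧ 0 ≤ d T ∧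
                y T ≤ x T + d T *
                    (a ^ 2 / ((d T) ^ 2 * (x T) ^ (4 * p) * 2 ^ (4 * p))) ^ ((1 : ℝ) / 2) *
                      (y T) ^ (2 * p + 1)) →
            y 1 / (2 * x 1) ≤ m' →
            ∀ T ≥ (1 : ℝ), y T / (2 * x T) ≤ m' ∧ y T ≤ 2 * x T) := by
  refine ⟨fun a x y d ha hx hy hd h ↦ mul_one_sub_le_half_of_le_add p ha.le hx hy hd h,
    1 / (8 * 2 ^ (2 * p)), by positivity, fun a ha ha₀ ↦
    ⟨3 / 4, 2, by norm_num, by norm_num, by norm_num, ?_, ?_⟩⟩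
  · intro x y d hx hy hd h
    exact le_three_quarters_or_two_le _ ha₀ (by positivity)
      (mul_one_sub_le_half_of_le_add p ha.le hx hy hd h)
  · intro x y d hxc hyc hhyp hstart T hT1
    have hg : ContinuousOn (fun T ↦ y T / (2 * x T)) (Ici 1) :=
      hyc.div (continuousOn_const.mul hxc) fun T hT ↦ by have := (hhyp T hT).1; positivity
    have hgap : ∀ T ∈ Ici (1 : ℝ), y T / (2 * x T) ≤ 3 / 4 ∨ 2 ≤ y T / (2 * x T) := by
      intro T hT
      obtain ⟨hx, hy, hd, h⟩ := hhyp T hT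
      exact le_three_quarters_or_two_le _ ha₀ (by positivity)
        (mul_one_sub_le_half_of_le_add p ha.le hx hy hd h)
    have hsmall := hg.le_of_forall_le_or_le isPreconnected_Ici self_mem_Ici (by norm_num) hgap
      hstart T hT1
    refine ⟨hsmall, ?_⟩
    have hx := (hhyp T hT1).1
    rw [div_le_iff₀ (by positivity)] at hsmall
    linarith

/-- The bootstrap (continuity) argument: from
`y ≤ x + d ρ^{1/2} y^{2p+1}` with `ρ = a²/(d² x^{4p} 2^{4p})` one gets
`h(1 − a h^{2p}) ≤ 1/2` for `h = y/(2x)`; for small `a` the set of admissible `h` splits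
into `h ≤ m′ < 1 < M′ ≤ h`, and by continuity in `T` the small branch propagates, giving
`y(T) ≤ 2x(T)` for all `T ≥ 1`. -/
theorem bootstrap_argument (p : ℕ) (hp : 1 ≤ p) :
    (∀ a x y d : ℝ, 0 < a → 0 < x → 0 ≤ y → 0 ≤ d →
        y ≤ x + d * (a ^ 2 / (d ^ 2 * x ^ (4 * p) * 2 ^ (4 * p))) ^ ((1 : ℝ) / 2) *
              y ^ (2 * p + 1) →
        (y / (2 * x)) * (1 - a * (y / (2 * x)) ^ (2 * p)) ≤ 1 / 2) ∧
    ∃ a₀ > (0 : ℝ), ∀ a : ℝ, 0 < a → a ≤ a₀ →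
      ∃ m' M' : ℝ, 1 / 2 < m' ∧ m' < 1 ∧ 1 < M' ∧
        (∀ x y d : ℝ, 0 < x → 0 ≤ y → 0 ≤ d →
            y ≤ x + d * (a ^ 2 / (d ^ 2 * x ^ (4 * p) * 2 ^ (4 * p))) ^ ((1 : ℝ) / 2) *
                  y ^ (2 * p + 1) →
            y / (2 * x) ≤ m' ∨ M' ≤ y / (2 * x)) ∧
        (∀ x y d : ℝ → ℝ,
            ContinuousOn x (Set.Ici (1 : ℝ)) → ContinuousOn y (Set.Ici (1 : ℝ)) →
            (∀ T ≥ (1 : ℝ), 0 < x T ∧ 0 ≤ y T ∧ 0 ≤ d T ∧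
                y T ≤ x T + d T *
                    (a ^ 2 / ((d T) ^ 2 * (x T) ^ (4 * p) * 2 ^ (4 * p))) ^ ((1 : ℝ) / 2) *
                      (y T) ^ (2 * p + 1)) →
            y 1 / (2 * x 1) ≤ m' →
            ∀ T ≥ (1 : ℝ), y T / (2 * x T) ≤ m' ∧ y T ≤ 2 * x T) :=
  bootstrap_argument_general p
end
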